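/- Let φ: ℝ^{2n} → ℝ^{2N} be differentiable with symplectic Jacobian: Dφ(z)ᵀ J_{2N} Dφ(z) = J_{2n} for all z. For a smooth Hamiltonian H on ℝ^{2N}, define the reduced vector field f(z) := (Dφ(z))⁺ J_{2N}∇H(φ(z)), where (Dφ(z))⁺ = J_{2n}Dφ(z)ᵀJ_{2N}ᵀ. Then f(z) = J_{2n}∇(H∘φ)(z); i.e., the manifold-Galerkin reduced system is Hamiltonian with Hamiltonian H∘φ. -/

import Mathlib

open Matrix

noncomputable section

def Jmat (m : ℕ) : Matrix (Fin m ⊕ Fin m) (Fin m ⊕ Fin m) ℝ :=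
  Matrix.fromBlocks 0 1 (-1) 0

def toEuc (ι : Type*) [Fintype ι] (x : ι → ℝ) : EuclideanSpace ℝ ι :=
  (EuclideanSpace.equiv ι ℝ).symm x

def ofEuc (ι : Type*) [Fintype ι] (x : EuclideanSpace ℝ ι) : ι → ℝ :=
  EuclideanSpace.equiv ι ℝ x

lemma Jmat_transpose_mul (m : ℕ) : (Jmat m)ᵀ * Jmat m = 1 := by
  simp [Jmat, Matrix.fromBlocks_transpose, Matrix.fromBlocks_multiply,
    ← Matrix.fromBlocks_one]

lemma grad_inner {ι : Type*} [Fintype ι] (f : EuclideanSpace ℝ ι → ℝ)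
    (x v : EuclideanSpace ℝ ι) :
    (inner ℝ (gradient f x) v : ℝ) = fderiv ℝ f x v := by
  rw [gradient, InnerProductSpace.toDual_symm_apply]

/-- If `φ : ℝ^{2n} → ℝ^{2N}` is differentiable with symplectic Jacobian `Dφ(z)`, then for any
smooth Hamiltonian `H` the manifold-Galerkin reduced vector field
`f(z) = (Dφ(z))⁺ J_{2N} ∇H(φ(z))` equals `J_{2n} ∇(H∘φ)(z)`: the reduced system is
Hamiltonian with Hamiltonian `H∘φ`. -/
theorem manifold_galerkin_reduction_hamiltonian (N n : ℕ)
    (φ : EuclideanSpace ℝ (Fin n ⊕ Fin n) → EuclideanSpace ℝ (Fin N ⊕ Fin N))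
    (Dφ : EuclideanSpace ℝ (Fin n ⊕ Fin n) →
      Matrix (Fin N ⊕ Fin N) (Fin n ⊕ Fin n) ℝ)
    (hφ : ∀ z, HasFDerivAt φ
      (LinearMap.toContinuousLinearMap (Matrix.toEuclideanLin (Dφ z))) z)
    (hsymp : ∀ z, (Dφ z)ᵀ * Jmat N * Dφ z = Jmat n)
    (H : EuclideanSpace ℝ (Fin N ⊕ Fin N) → ℝ) (hH : Differentiable ℝ H)
    (z : EuclideanSpace ℝ (Fin n ⊕ Fin n)) :
    (Jmat n * (Dφ z)ᵀ * (Jmat N)ᵀ).mulVec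
        ((Jmat N).mulVec (ofEuc _ (gradient H (φ z)))) =
      (Jmat n).mulVec (ofEuc _ (gradient (H ∘ φ) z)) := by
  have key : ofEuc _ (gradient (H ∘ φ) z) =
      (Dφ z)ᵀ.mulVec (ofEuc _ (gradient H (φ z))) := by
    have hcomp : HasFDerivAt (H ∘ φ)
        ((fderiv ℝ H (φ z)).comp
          (LinearMap.toContinuousLinearMap (Matrix.toEuclideanLin (Dφ z)))) z :=
      (hH (φ z)).hasFDerivAt.comp z (hφ z)
    funext i
    have h1 := grad_inner (H ∘ φ) z (EuclideanSpace.single i 1)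
    rw [hcomp.fderiv] at h1
    have h2 := grad_inner H (φ z)
      ((Matrix.toEuclideanLin (Dφ z)) (EuclideanSpace.single i 1))
    simp only [ContinuousLinearMap.comp_apply, LinearMap.coe_toContinuousLinearMap, LinearMap.coe_toContinuousLinearMap'] at h1
    rw [← h2] at h1
    simp only [PiLp.inner_apply, RCLike.inner_apply, conj_trivial,
      Matrix.toEuclideanLin_apply, EuclideanSpace.ofLp_single, Matrix.mulVec_single,
      mul_one, PiLp.toLp_apply, EuclideanSpace.single_apply,
      mul_ite, mul_zero, Finset.sum_ite_eq', Finset.mem_univ, if_true] at h1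
    simpa [ofEuc, Matrix.mulVec, dotProduct, mul_comm] using h1
  rw [key]
  simp [Matrix.mulVec_mulVec, Matrix.mul_assoc, Jmat_transpose_mul]
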